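/- The map f₁ : S¹ × D² → S¹ × D², f₁(θ, x, y) = (θ + π, −r₁x, −r₁y), with 0 < r₁ < 1, is injective, and its image is disjoint from the images of f₂(θ,x,y) = (θ+π, r₀cos θ + r₂x, r₀sin θ + r₂y) and f₃(θ,x,y) = (θ+π, −r₀cos θ + r₂(x cos 2θ − y sin 2θ), −r₀sin θ + r₂(x sin 2θ + y cos 2θ)), provided r₁ + r₂ < r₀ and r₀ + r₂ ≤ 1; moreover the images of f₂ and f₃ are disjoint from each other under the same hypotheses. -/

import Mathlib

/-!
Read the disc coordinates as a complex number `z`. All three maps send `θ` to `θ + π`, so images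
can only meet over the same `θ`. There `f₁`, `f₂`, `f₃` act on `z` as `-r₁ z`,
`r₀ e^{iθ} + r₂ z` and `-r₀ e^{iθ} + r₂ e^{2iθ} z`, so they map the unit disc into the closed discs
of radii `r₁`, `r₂`, `r₂` about `0`, `r₀ e^{iθ}`, `-r₀ e^{iθ}`. Their centres are `r₀` resp. `2 r₀`
apart, more than the sums `r₁ + r₂` resp. `2 r₂` of the radii.
-/

noncomputable section

/-- `f₁(θ,x,y) = (θ+π, −r₁x, −r₁y)`. -/
def fOne (r₁ : ℝ) (q : Real.Angle × ℝ × ℝ) : Real.Angle × ℝ × ℝ :=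
  (q.1 + ((Real.pi : ℝ) : Real.Angle), -r₁ * q.2.1, -r₁ * q.2.2)

/-- `f₂(θ,x,y) = (θ+π, r₀cos θ + r₂x, r₀sin θ + r₂y)`. -/
def fTwo (r₀ r₂ : ℝ) (q : Real.Angle × ℝ × ℝ) : Real.Angle × ℝ × ℝ :=
  (q.1 + ((Real.pi : ℝ) : Real.Angle),
   r₀ * q.1.cos + r₂ * q.2.1, r₀ * q.1.sin + r₂ * q.2.2)

/-- `f₃(θ,x,y) = (θ+π, −r₀cos θ + r₂(x cos 2θ − y sin 2θ),
−r₀sin θ + r₂(x sin 2θ + y cos 2θ))`. -/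
def fThree (r₀ r₂ : ℝ) (q : Real.Angle × ℝ × ℝ) : Real.Angle × ℝ × ℝ :=
  (q.1 + ((Real.pi : ℝ) : Real.Angle),
   -r₀ * q.1.cos + r₂ * (q.2.1 * (2 • q.1).cos - q.2.2 * (2 • q.1).sin),
   -r₀ * q.1.sin + r₂ * (q.2.1 * (2 • q.1).sin + q.2.2 * (2 • q.1).cos))

/-- `S¹ × D²` as a subset of `S¹ × ℝ²`. -/
def solidTorus : Set (Real.Angle × ℝ × ℝ) :=
  {q | q.2.1 ^ 2 + q.2.2 ^ 2 ≤ 1}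

open Complex Metric

def discCoord (q : Real.Angle × ℝ × ℝ) : ℂ := ⟨q.2.1, q.2.2⟩

lemma norm_discCoord_le_one {q : Real.Angle × ℝ × ℝ} (hq : q ∈ solidTorus) :
    ‖discCoord q‖ ≤ 1 := by
  rw [← sq_le_one_iff₀ (norm_nonneg _), Complex.sq_norm, Complex.normSq_mk, ← sq, ← sq]
  exact hq

lemma discCoord_fOne (r₁ : ℝ) (q : Real.Angle × ℝ × ℝ) :
    discCoord (fOne r₁ q) = -r₁ * discCoord q := by
  apply Complex.ext <;> simp [discCoord, fOne]

lemma discCoord_fTwo (r₀ r₂ : ℝ) (q : Real.Angle × ℝ × ℝ) :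
    discCoord (fTwo r₀ r₂ q) = r₀ * q.1.toCircle + r₂ * discCoord q := by
  apply Complex.ext <;> simp [discCoord, fTwo, Real.Angle.coe_toCircle]

lemma discCoord_fThree (r₀ r₂ : ℝ) (q : Real.Angle × ℝ × ℝ) :
    discCoord (fThree r₀ r₂ q) =
      -(r₀ * q.1.toCircle) + r₂ * ((2 • q.1).toCircle * discCoord q) := by
  apply Complex.ext <;>
    simp [discCoord, fThree, Real.Angle.coe_toCircle, -mul_eq_mul_left_iff] <;> ring

lemma mem_closedBall_add_mul {c z : ℂ} {r : ℝ} (hr : 0 ≤ r) (hz : ‖z‖ ≤ 1) :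
    c + r * z ∈ closedBall c r := by
  rw [mem_closedBall, dist_eq_norm, add_sub_cancel_left, norm_mul, Complex.norm_real,
    Real.norm_of_nonneg hr]
  exact mul_le_of_le_one_right hr hz

section Fibers

variable {r₀ r₁ r₂ : ℝ} {q : Real.Angle × ℝ × ℝ}

lemma discCoord_fOne_mem (h₁ : 0 ≤ r₁) (hq : q ∈ solidTorus) :
    discCoord (fOne r₁ q) ∈ closedBall 0 r₁ := by
  rw [discCoord_fOne, mem_closedBall_zero_iff, norm_mul, norm_neg, Complex.norm_real,
    Real.norm_of_nonneg h₁]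
  exact mul_le_of_le_one_right h₁ (norm_discCoord_le_one hq)

lemma discCoord_fTwo_mem (h₂ : 0 ≤ r₂) (hq : q ∈ solidTorus) :
    discCoord (fTwo r₀ r₂ q) ∈ closedBall (r₀ * (q.1.toCircle : ℂ)) r₂ := by
  rw [discCoord_fTwo]
  exact mem_closedBall_add_mul h₂ (norm_discCoord_le_one hq)

lemma discCoord_fThree_mem (h₂ : 0 ≤ r₂) (hq : q ∈ solidTorus) :
    discCoord (fThree r₀ r₂ q) ∈ closedBall (-(r₀ * (q.1.toCircle : ℂ))) r₂ := by
  rw [discCoord_fThree]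
  refine mem_closedBall_add_mul h₂ ?_
  rw [norm_mul, Circle.norm_coe, one_mul]
  exact norm_discCoord_le_one hq

end Fibers

lemma norm_ofReal_mul_toCircle {r : ℝ} (hr : 0 ≤ r) (θ : Real.Angle) :
    ‖(r : ℂ) * θ.toCircle‖ = r := by
  rw [norm_mul, Circle.norm_coe, mul_one, Complex.norm_real, Real.norm_of_nonneg hr]

lemma disjoint_image_of_fiberwise_closedBall {S : Set (Real.Angle × ℝ × ℝ)}
    {f g : Real.Angle × ℝ × ℝ → Real.Angle × ℝ × ℝ}
    (hbase : ∀ p q, (f p).1 = (g q).1 → p.1 = q.1) {c d : Real.Angle → ℂ} {r s : ℝ}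
    (hf : ∀ q ∈ S, discCoord (f q) ∈ closedBall (c q.1) r)
    (hg : ∀ q ∈ S, discCoord (g q) ∈ closedBall (d q.1) s)
    (hcd : ∀ θ, r + s < dist (c θ) (d θ)) :
    Disjoint (f '' S) (g '' S) := by
  rw [Set.disjoint_left]
  rintro _ ⟨p, hp, rfl⟩ ⟨q, hq, hgf⟩
  have hpq : p.1 = q.1 := hbase p q (congrArg Prod.fst hgf.symm)
  refine (closedBall_disjoint_closedBall (hcd p.1)).ne_of_mem (hf p hp) ?_
    (congrArg discCoord hgf.symm)
  rw [hpq]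
  exact hg q hq

lemma fOne_injective {r₁ : ℝ} (h₁ : r₁ ≠ 0) : Function.Injective (fOne r₁) := by
  intro p q h
  simp only [fOne, Prod.mk.injEq, mul_right_inj' (neg_ne_zero.2 h₁)] at h
  exact Prod.ext (add_right_cancel h.1) (Prod.ext h.2.1 h.2.2)

theorem stmt16_general (r₀ r₁ r₂ : ℝ) (h₁ : 0 < r₁) (h₀ : 0 < r₀)
    (h₂ : 0 < r₂) (hsum : r₁ + r₂ < r₀) :
    Set.InjOn (fOne r₁) solidTorus ∧
      Disjoint (fOne r₁ '' solidTorus) (fTwo r₀ r₂ '' solidTorus) ∧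
      Disjoint (fOne r₁ '' solidTorus) (fThree r₀ r₂ '' solidTorus) ∧
      Disjoint (fTwo r₀ r₂ '' solidTorus) (fThree r₀ r₂ '' solidTorus) := by
  have hbase {p q : Real.Angle × ℝ × ℝ} (h : p.1 + (Real.pi : Real.Angle) = q.1 + Real.pi) :
      p.1 = q.1 := add_right_cancel h
  have hnorm (θ : Real.Angle) : ‖(r₀ : ℂ) * θ.toCircle‖ = r₀ := norm_ofReal_mul_toCircle h₀.le θ
  refine ⟨(fOne_injective h₁.ne').injOn, ?_, ?_, ?_⟩
  · refine disjoint_image_of_fiberwise_closedBall (fun _ _ => hbase) (c := 0)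
      (d := fun θ => r₀ * θ.toCircle) (fun _ => discCoord_fOne_mem h₁.le)
      (fun _ => discCoord_fTwo_mem h₂.le) fun θ => ?_
    rwa [Pi.zero_apply, dist_zero_left, hnorm]
  · refine disjoint_image_of_fiberwise_closedBall (fun _ _ => hbase) (c := 0)
      (d := fun θ => -(r₀ * θ.toCircle)) (fun _ => discCoord_fOne_mem h₁.le)
      (fun _ => discCoord_fThree_mem h₂.le) fun θ => ?_
    rwa [Pi.zero_apply, dist_zero_left, norm_neg, hnorm]
  · refine disjoint_image_of_fiberwise_closedBall (fun _ _ => hbase)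
      (c := fun θ => r₀ * θ.toCircle) (d := fun θ => -(r₀ * θ.toCircle))
      (fun _ => discCoord_fTwo_mem h₂.le) (fun _ => discCoord_fThree_mem h₂.le) fun θ => ?_
    rw [dist_eq_norm, sub_neg_eq_add, ← two_mul ((r₀ : ℂ) * θ.toCircle), norm_mul,
      Complex.norm_two, hnorm]
    linarith

/-- with `0 < r₁ < 1`, `0 < r₀`, `0 < r₂`, `r₁ + r₂ < r₀` and
`r₀ + r₂ ≤ 1`, the map `f₁` is injective on `S¹ × D²` and the images of
`f₁, f₂, f₃` are pairwise disjoint. -/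
theorem stmt16 (r₀ r₁ r₂ : ℝ) (h₁ : 0 < r₁) (h₁' : r₁ < 1) (h₀ : 0 < r₀)
    (h₂ : 0 < r₂) (hsum : r₁ + r₂ < r₀) (hsum' : r₀ + r₂ ≤ 1) :
    Set.InjOn (fOne r₁) solidTorus ∧
      Disjoint (fOne r₁ '' solidTorus) (fTwo r₀ r₂ '' solidTorus) ∧
      Disjoint (fOne r₁ '' solidTorus) (fThree r₀ r₂ '' solidTorus) ∧
      Disjoint (fTwo r₀ r₂ '' solidTorus) (fThree r₀ r₂ '' solidTorus) :=
  stmt16_general r₀ r₁ r₂ h₁ h₀ h₂ hsum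

end
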